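/- There hold the two integral identities 2 ∫_ℝ w₂'(x) w'(x) dx = −(2/(p−1) + 1/2) ∫_ℝ w'(x)² dx and σ^{−1} ∫_ℝ w₂(x) w(x) dx = (1/2 − 2/(p−1)) ∫_ℝ w'(x)² dx. -/

import Mathlib

/-!
Write `w₂ = α w + β x w'` with `α = -1/(p-1)` and `β = -1/2`. For any exponentially
decaying `C¹` function `f`, integrating the total derivative of `β x f² / 2` gives
`∫ (α f + β x f') f = (α - β/2) ∫ f²`; applied to `f = w` this computes `∫ w₂ w`, and
applied to `f = w'` (since `w₂' = (α + β) w' + β x w''`) it computes `∫ w₂' w'`. The second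
identity then needs the Pohozaev relation `(p - 1) ∫ w² = (p + 3) ∫ w'²`, which combines the
conserved energy `(p+1) w'² = (p+1) w² - 2 w^(p+1)` (it vanishes at infinity) with
`∫ w w'' = -∫ w'²`.
-/

open Real MeasureTheory Filter Set Topology

theorem integrable_exp_neg_mul_abs {b : ℝ} (hb : 0 < b) :
    Integrable (fun x : ℝ => exp (-b * |x|)) := by
  rw [← integrableOn_univ, ← Iic_union_Ioi (a := (0 : ℝ))]
  refine IntegrableOn.union ?_ ?_
  · refine (integrableOn_exp_mul_Iic hb 0).congr_fun (fun x hx => ?_) measurableSet_Iic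
    simp [abs_of_nonpos (mem_Iic.mp hx)]
  · refine (exp_neg_integrableOn_Ioi 0 hb).congr_fun (fun x hx => ?_) measurableSet_Ioi
    simp [abs_of_pos (mem_Ioi.mp hx)]

def ExpDecaying (f : ℝ → ℝ) : Prop :=
  ∃ C b : ℝ, 0 < b ∧ ∀ x, |f x| ≤ C * exp (-b * |x|)

namespace ExpDecaying

variable {f g : ℝ → ℝ}

theorem tendsto_cocompact (hf : ExpDecaying f) : Tendsto f (cocompact ℝ) (𝓝 0) := by
  obtain ⟨C, b, hb, hfb⟩ := hf
  refine squeeze_zero_norm hfb ?_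
  have hexp : Tendsto (fun x : ℝ => exp (-b * |x|)) (cocompact ℝ) (𝓝 0) :=
    tendsto_exp_atBot.comp <| (tendsto_norm_cocompact_atTop (E := ℝ)).const_mul_atTop_of_neg
      (neg_neg_iff_pos.2 hb)
  simpa using hexp.const_mul C

theorem tendsto_atTop (hf : ExpDecaying f) : Tendsto f atTop (𝓝 0) :=
  hf.tendsto_cocompact.mono_left atTop_le_cocompact

theorem tendsto_atBot (hf : ExpDecaying f) : Tendsto f atBot (𝓝 0) :=
  hf.tendsto_cocompact.mono_left atBot_le_cocompact

theorem integrable (hf : ExpDecaying f) (hm : AEStronglyMeasurable f) : Integrable f := by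
  obtain ⟨C, b, hb, hfb⟩ := hf
  exact ((integrable_exp_neg_mul_abs hb).const_mul C).mono' hm (Eventually.of_forall hfb)

theorem const_mul (hf : ExpDecaying f) (c : ℝ) : ExpDecaying (fun x => c * f x) := by
  obtain ⟨C, b, hb, hfb⟩ := hf
  refine ⟨|c| * C, b, hb, fun x => ?_⟩
  rw [abs_mul, mul_assoc]
  exact mul_le_mul_of_nonneg_left (hfb x) (abs_nonneg c)

theorem add (hf : ExpDecaying f) (hg : ExpDecaying g) : ExpDecaying (fun x => f x + g x) := by
  obtain ⟨C, b, hb, hfb⟩ := hf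
  obtain ⟨D, c, hc, hgc⟩ := hg
  refine ⟨|C| + |D|, min b c, lt_min hb hc, fun x => ?_⟩
  have hexp_b : exp (-b * |x|) ≤ exp (-min b c * |x|) := by gcongr; exact min_le_left b c
  have hexp_c : exp (-c * |x|) ≤ exp (-min b c * |x|) := by gcongr; exact min_le_right b c
  calc |f x + g x| ≤ |f x| + |g x| := abs_add_le _ _
    _ ≤ |C| * exp (-min b c * |x|) + |D| * exp (-min b c * |x|) := by
      gcongr
      · exact (hfb x).trans (mul_le_mul (le_abs_self C) hexp_b (exp_pos _).le (abs_nonneg C))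
      · exact (hgc x).trans (mul_le_mul (le_abs_self D) hexp_c (exp_pos _).le (abs_nonneg D))
    _ = (|C| + |D|) * exp (-min b c * |x|) := by ring

theorem sub (hf : ExpDecaying f) (hg : ExpDecaying g) : ExpDecaying (fun x => f x - g x) := by
  simpa only [sub_eq_add_neg, neg_one_mul] using hf.add (hg.const_mul (-1))

theorem mul (hf : ExpDecaying f) (hg : ExpDecaying g) : ExpDecaying (fun x => f x * g x) := by
  obtain ⟨C, b, hb, hfb⟩ := hf
  obtain ⟨D, c, hc, hgc⟩ := hg
  refine ⟨C * D, b + c, add_pos hb hc, fun x => ?_⟩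
  calc |f x * g x| = |f x| * |g x| := abs_mul _ _
    _ ≤ (C * exp (-b * |x|)) * (D * exp (-c * |x|)) :=
      mul_le_mul (hfb x) (hgc x) (abs_nonneg _) ((abs_nonneg _).trans (hfb x))
    _ = C * D * exp (-(b + c) * |x|) := by rw [neg_add, add_mul, exp_add]; ring

theorem id_mul (hf : ExpDecaying f) : ExpDecaying (fun x => x * f x) := by
  obtain ⟨C, b, hb, hfb⟩ := hf
  have hC : 0 ≤ C := by simpa using (abs_nonneg _).trans (hfb 0)
  refine ⟨2 / b * C, b / 2, half_pos hb, fun x => ?_⟩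
  set t := b / 2 * |x|
  have ht : t * exp (-t) ≤ 1 := by
    calc t * exp (-t) ≤ exp t * exp (-t) :=
          mul_le_mul_of_nonneg_right ((le_add_of_nonneg_right zero_le_one).trans
            (add_one_le_exp t)) (exp_pos _).le
      _ = 1 := by rw [← exp_add, add_neg_cancel, exp_zero]
  have hx : |x| = 2 / b * t := by simp only [t]; field_simp
  calc |x * f x| = |x| * |f x| := abs_mul _ _
    _ ≤ |x| * (C * exp (-b * |x|)) := mul_le_mul_of_nonneg_left (hfb x) (abs_nonneg x)
    _ = 2 / b * C * (t * exp (-t)) * exp (-t) := by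
      rw [hx, show -b * (2 / b * t) = -t + -t by field_simp; ring, exp_add]; ring
    _ ≤ 2 / b * C * 1 * exp (-t) := by gcongr
    _ = 2 / b * C * exp (-(b / 2) * |x|) := by simp only [t, mul_one, neg_mul]

theorem rpow (hf : ExpDecaying f) (hf0 : ∀ x, 0 ≤ f x) {q : ℝ} (hq : 0 < q) :
    ExpDecaying (fun x => f x ^ q) := by
  obtain ⟨C, b, hb, hfb⟩ := hf
  have hC : 0 ≤ C := by simpa using (abs_nonneg _).trans (hfb 0)
  refine ⟨C ^ q, q * b, mul_pos hq hb, fun x => ?_⟩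
  rw [abs_of_nonneg (rpow_nonneg (hf0 x) q)]
  calc f x ^ q ≤ (C * exp (-b * |x|)) ^ q :=
        rpow_le_rpow (hf0 x) ((le_abs_self _).trans (hfb x)) hq.le
    _ = C ^ q * exp (-(q * b) * |x|) := by
      rw [mul_rpow hC (exp_pos _).le, ← exp_mul]; ring_nf

end ExpDecaying

theorem integral_mul_add_id_mul_deriv_mul_self {f f' : ℝ → ℝ} (α β : ℝ)
    (hf : ∀ x, HasDerivAt f (f' x) x) (hf'c : Continuous f') (hfd : ExpDecaying f)
    (hf'd : ExpDecaying f') :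
    ∫ x, (α * f x + β * (x * f' x)) * f x = (α - β / 2) * ∫ x, f x ^ 2 := by
  have hfc : Continuous f := continuous_iff_continuousAt.2 fun x => (hf x).continuousAt
  have hsq : Integrable (fun x => f x ^ 2) := by
    simpa only [sq] using (hfd.mul hfd).integrable (hfc.mul hfc).aestronglyMeasurable
  have hlhs : Integrable (fun x => (α * f x + β * (x * f' x)) * f x) :=
    (((hfd.const_mul α).add (hf'd.id_mul.const_mul β)).mul hfd).integrable
      (by fun_prop : Continuous _).aestronglyMeasurable
  have hF := (hfd.mul hfd).id_mul.const_mul (β / 2)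
  have hF' : ∀ x, HasDerivAt (fun x => β / 2 * (x * (f x * f x)))
      ((α * f x + β * (x * f' x)) * f x - (α - β / 2) * f x ^ 2) x := fun x =>
    (((hasDerivAt_id' x).mul ((hf x).mul (hf x))).const_mul (β / 2)).congr_deriv
      (by simp only [Pi.mul_apply]; ring)
  have h := integral_of_hasDerivAt_of_tendsto hF' (hlhs.sub (hsq.const_mul _))
    hF.tendsto_atBot hF.tendsto_atTop
  rwa [integral_sub hlhs (hsq.const_mul _), integral_const_mul, sub_self, sub_eq_zero] at h

theorem energy_eq_zero {p : ℝ} (hp : 0 < p + 1) {w v a : ℝ → ℝ} (hw_pos : ∀ x, 0 < w x)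
    (hw : ∀ x, HasDerivAt w (v x) x) (hv : ∀ x, HasDerivAt v (a x) x)
    (hode : ∀ x, a x - w x + w x ^ p = 0)
    (hw_lim : Tendsto w atTop (𝓝 0)) (hv_lim : Tendsto v atTop (𝓝 0)) (x : ℝ) :
    (p + 1) * v x ^ 2 - (p + 1) * w x ^ 2 + 2 * w x ^ (p + 1) = 0 := by
  set E := fun y => (p + 1) * v y ^ 2 - (p + 1) * w y ^ 2 + 2 * w y ^ (p + 1)
  have hE : ∀ y, HasDerivAt E 0 y := fun y => by
    have hrpow := (hw y).rpow_const (p := p + 1) (Or.inl (hw_pos y).ne')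
    rw [add_sub_cancel_right] at hrpow
    refine ((((hv y).pow 2).const_mul _).sub (((hw y).pow 2).const_mul _)
      |>.add (hrpow.const_mul 2)).congr_deriv ?_
    linear_combination (2 * (p + 1) * v y) * hode y
  have hE_const : ∀ y, E x = E y := fun y =>
    is_const_of_deriv_eq_zero (fun z => (hE z).differentiableAt) (fun z => (hE z).deriv) x y
  have hE_lim : Tendsto E atTop (𝓝 0) := by
    simpa [zero_rpow hp.ne'] using
      (((hv_lim.pow 2).const_mul (p + 1)).sub ((hw_lim.pow 2).const_mul (p + 1))).add
        ((hw_lim.rpow_const (Or.inr hp.le)).const_mul 2)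
  exact tendsto_nhds_unique (tendsto_const_nhds.congr hE_const) hE_lim

theorem pohozaev_identity {p : ℝ} (hp : 0 < p + 1) {w v a : ℝ → ℝ} (hw_pos : ∀ x, 0 < w x)
    (hw : ∀ x, HasDerivAt w (v x) x) (hv : ∀ x, HasDerivAt v (a x) x)
    (hode : ∀ x, a x - w x + w x ^ p = 0) (hwd : ExpDecaying w) (hvd : ExpDecaying v) :
    (p - 1) * ∫ x, w x ^ 2 = (p + 3) * ∫ x, v x ^ 2 := by
  have hwc : Continuous w := continuous_iff_continuousAt.2 fun x => (hw x).continuousAt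
  have hvc : Continuous v := continuous_iff_continuousAt.2 fun x => (hv x).continuousAt
  have hI : Integrable (fun x => v x ^ 2) := by
    simpa only [sq] using (hvd.mul hvd).integrable (hvc.mul hvc).aestronglyMeasurable
  have hJ : Integrable (fun x => w x ^ 2) := by
    simpa only [sq] using (hwd.mul hwd).integrable (hwc.mul hwc).aestronglyMeasurable
  have hK : Integrable (fun x => w x ^ (p + 1)) :=
    (hwd.rpow (fun x => (hw_pos x).le) hp).integrable
      (hwc.rpow_const fun x => Or.inl (hw_pos x).ne').aestronglyMeasurable
  have hK' : Integrable (fun x => w x ^ 2 - w x ^ (p + 1)) := hJ.sub hK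
  have henergy :
      (p + 1) * ∫ x, v x ^ 2 = (p + 1) * (∫ x, w x ^ 2) - 2 * ∫ x, w x ^ (p + 1) := by
    rw [← integral_const_mul, ← integral_const_mul, ← integral_const_mul,
      ← integral_sub (hJ.const_mul _) (hK.const_mul _)]
    refine integral_congr_ae (Eventually.of_forall fun x => ?_)
    linear_combination energy_eq_zero hp hw_pos hw hv hode hwd.tendsto_atTop hvd.tendsto_atTop x
  have hparts : ∫ x, (v x ^ 2 + (w x ^ 2 - w x ^ (p + 1))) = 0 := by
    have hwv := hwd.mul hvd
    refine (integral_of_hasDerivAt_of_tendsto (fun x => ((hw x).mul (hv x)).congr_deriv ?_)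
      (hI.add hK') hwv.tendsto_atBot hwv.tendsto_atTop).trans (sub_self 0)
    show v x * v x + w x * a x = v x ^ 2 + (w x ^ 2 - w x ^ (p + 1))
    rw [rpow_add_one (hw_pos x).ne']
    linear_combination (w x) * hode x
  rw [integral_add hI hK', integral_sub hJ hK] at hparts
  linear_combination -henergy - 2 * hparts

/-- The two integral identities
`2 ∫ w₂' w' = −(2/(p−1) + 1/2) ∫ (w')²` and
`σ⁻¹ ∫ w₂ w = (1/2 − 2/(p−1)) ∫ (w')²`. -/
theorem integral_identities_for_w2
    (p : ℝ) (hp : 1 < p) (σ : ℝ) (hσ : σ = (p + 1) / (p - 1) - 1 / 2)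
    (w : ℝ → ℝ)
    (hw_pos : ∀ x, 0 < w x)
    (hw_smooth : ContDiff ℝ 2 w)
    (hw_eq : ∀ x, deriv (deriv w) x - w x + w x ^ p = 0)
    (hdecay : ∃ C₀ > (0:ℝ), ∃ a > (0:ℝ),
      ∀ x : ℝ, w x + |deriv w x| ≤ C₀ * Real.exp (-a * |x|))
    (w₂ : ℝ → ℝ)
    (hw₂ : w₂ = fun x => -(w x) / (p - 1) - (1 / 2) * x * deriv w x) :
    2 * (∫ x : ℝ, deriv w₂ x * deriv w x)
        = -(2 / (p - 1) + 1 / 2) * ∫ x : ℝ, (deriv w x) ^ 2 ∧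
    σ⁻¹ * (∫ x : ℝ, w₂ x * w x)
        = (1 / 2 - 2 / (p - 1)) * ∫ x : ℝ, (deriv w x) ^ 2 := by
  obtain ⟨C₀, -, a, ha, hdec⟩ := hdecay
  have hw' : ContDiff ℝ 1 (deriv w) := hw_smooth.deriv'
  have hw : ∀ x, HasDerivAt w (deriv w x) x := fun x =>
    (hw_smooth.differentiable two_ne_zero x).hasDerivAt
  have hv : ∀ x, HasDerivAt (deriv w) (deriv (deriv w) x) x := fun x =>
    (hw'.differentiable one_ne_zero x).hasDerivAt
  have hwd : ExpDecaying w := ⟨C₀, a, ha, fun x => by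
    rw [abs_of_pos (hw_pos x)]; linarith [hdec x, abs_nonneg (deriv w x)]⟩
  have hvd : ExpDecaying (deriv w) := ⟨C₀, a, ha, fun x => by linarith [hdec x, hw_pos x]⟩
  have had : ExpDecaying (deriv (deriv w)) := by
    have h := hwd.sub (hwd.rpow (fun x => (hw_pos x).le) (by linarith : 0 < p))
    rwa [show (fun x => w x - w x ^ p) = deriv (deriv w) from
      funext fun x => by linear_combination -hw_eq x] at h
  have hw₂_eq : ∀ x, w₂ x = -(1 / (p - 1)) * w x + -(1 / 2) * (x * deriv w x) := fun x => by
    rw [hw₂]; ring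
  have hw₂' : ∀ x, deriv w₂ x
      = (-(1 / (p - 1)) + -(1 / 2)) * deriv w x + -(1 / 2) * (x * deriv (deriv w) x) := fun x => by
    rw [funext hw₂_eq]
    refine ((((hw x).const_mul _).add (((hasDerivAt_id' x).mul (hv x)).const_mul _)).congr_deriv
      ?_).deriv
    ring
  have hP := pohozaev_identity (by linarith) hw_pos hw hv hw_eq hwd hvd
  simp_rw [hw₂', hw₂_eq, integral_mul_add_id_mul_deriv_mul_self _ _ hv
    (hw'.continuous_deriv le_rfl) hvd had, integral_mul_add_id_mul_deriv_mul_self _ _ hw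
    hw'.continuous hwd hvd]
  have hp1 : p - 1 ≠ 0 := by linarith
  have hp3 : p + 3 ≠ 0 := by linarith
  refine ⟨by ring, ?_⟩
  rw [show σ = (p + 3) / (2 * (p - 1)) by rw [hσ]; field_simp; ring]
  field_simp
  linear_combination (p - 5) * hP
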